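/- arXiv:2406.07746 — 2 statements merged into one kernel-verified Lean document; each statement's English description precedes it below -/
import Mathlib

section
/- Let M be an n×n real matrix that is (κ₀,γ₀)-strongly stable, let K be a real m×n matrix with ‖K‖ ≤ κ₀, let Q be a symmetric n×n matrix and R a symmetric m×m matrix with 0 ⪯ Q ⪯ α₁·I and 0 ⪯ R ⪯ α₁·I for some α₁ > 0, and let P be a symmetric n×n matrix satisfying the Lyapunov equation P = Q + KᵀRK + MᵀPM. Then P ⪯ (κ₀²/γ₀)·α₁·(1+κ₀²)·I, and hence tr(P) ≤ (n+m)·(κ₀²/γ₀)·α₁·(1+κ₀²). -/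
open Matrix
open scoped Matrix.Norms.L2Operator

/-- A real square matrix `M` is `(κ,γ)`-strongly stable if there exist an invertible `H`
and an `L` with `M = H L H⁻¹`, `‖L‖ ≤ 1 − γ` and `‖H‖·‖H⁻¹‖ ≤ κ`
(spectral norms). -/
def StronglyStable {n : ℕ} (M : Matrix (Fin n) (Fin n) ℝ) (κ γ : ℝ) : Prop :=
  ∃ H L : Matrix (Fin n) (Fin n) ℝ,
    IsUnit H.det ∧ M = H * L * H⁻¹ ∧ ‖L‖ ≤ 1 - γ ∧ ‖H‖ * ‖H⁻¹‖ ≤ κ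

/-!
Unrolling `P = S + MᵀPM` with `S = Q + KᵀRK` along the orbit `x, Mx, M²x, …` gives
`xᵀPx = ∑_{t<T} (Mᵗx)ᵀS(Mᵗx) + (M^T x)ᵀP(M^T x)`. Strong stability yields `‖Mᵗ‖ ≤ κ(1-γ)ᵗ`, so the
remainder tends to `0`, while each stage cost is at most `α(1+κ²)κ²(1-γ)²ᵗ|x|²`; the geometric
series sums to `1/(1-(1-γ)²) ≤ 1/γ`. The trace bound is the trace of the Loewner bound.
-/

open Finset Filter Topology

lemma norm_pow_le_of_norm_one_le {α : Type*} [SeminormedRing α] (h1 : ‖(1 : α)‖ ≤ 1) (a : α)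
    (t : ℕ) : ‖a ^ t‖ ≤ ‖a‖ ^ t := by
  rcases t.eq_zero_or_pos with rfl | ht
  · simpa using h1
  · exact norm_pow_le' a ht

namespace Matrix

variable {m n : Type*} [Fintype m] [Fintype n]

lemma dotProduct_self_eq_norm_sq (x : n → ℝ) : x ⬝ᵥ x = ‖WithLp.toLp 2 x‖ ^ 2 := by
  rw [← real_inner_self_eq_norm_sq, EuclideanSpace.inner_toLp_toLp, star_trivial]

lemma dotProduct_transpose_mul_mul_mulVec {R : Type*} [CommSemiring R] (A : Matrix m n R)
    (B : Matrix m m R) (x : n → R) :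
    x ⬝ᵥ ((Aᵀ * B * A) *ᵥ x) = (A *ᵥ x) ⬝ᵥ (B *ᵥ (A *ᵥ x)) := by
  rw [← mulVec_mulVec, ← mulVec_mulVec, dotProduct_transpose_mulVec, dotProduct_comm]

lemma dotProduct_mulVec_eq_sum_add_of_lyapunov [DecidableEq n] {R : Type*} [CommSemiring R]
    {P S M : Matrix n n R} (hP : P = S + Mᵀ * P * M) (x : n → R) (T : ℕ) :
    x ⬝ᵥ (P *ᵥ x) = ∑ t ∈ range T, (M ^ t *ᵥ x) ⬝ᵥ (S *ᵥ (M ^ t *ᵥ x)) +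
      (M ^ T *ᵥ x) ⬝ᵥ (P *ᵥ (M ^ T *ᵥ x)) := by
  have step (y : n → R) : y ⬝ᵥ (P *ᵥ y) = y ⬝ᵥ (S *ᵥ y) + (M *ᵥ y) ⬝ᵥ (P *ᵥ (M *ᵥ y)) := by
    nth_rewrite 1 [hP]
    rw [add_mulVec, dotProduct_add, dotProduct_transpose_mul_mul_mulVec]
  induction T with
  | zero => simp
  | succ T ih => rw [ih, step, sum_range_succ, pow_succ', ← mulVec_mulVec, add_assoc]

variable [DecidableEq n]

lemma l2_opNorm_one_le {𝕜 : Type*} [RCLike 𝕜] : ‖(1 : Matrix n n 𝕜)‖ ≤ 1 := by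
  rw [cstar_norm_def, map_one]
  exact ContinuousLinearMap.norm_id_le

lemma mulVec_dotProduct_self_le_of_l2_opNorm_le {A : Matrix m n ℝ} {c : ℝ} (hA : ‖A‖ ≤ c)
    (x : n → ℝ) : (A *ᵥ x) ⬝ᵥ (A *ᵥ x) ≤ c ^ 2 * (x ⬝ᵥ x) := by
  rw [dotProduct_self_eq_norm_sq, dotProduct_self_eq_norm_sq, ← mul_pow]
  refine pow_le_pow_left₀ (norm_nonneg _) ?_ 2
  exact (A.l2_opNorm_mulVec _).trans (mul_le_mul_of_nonneg_right hA (norm_nonneg _))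

lemma dotProduct_mulVec_le_l2_opNorm_mul (A : Matrix n n ℝ) (x : n → ℝ) :
    x ⬝ᵥ (A *ᵥ x) ≤ ‖A‖ * (x ⬝ᵥ x) := by
  have h := real_inner_le_norm (WithLp.toLp 2 x) (WithLp.toLp 2 (A *ᵥ x))
  rw [EuclideanSpace.inner_toLp_toLp, star_trivial, dotProduct_comm] at h
  rw [dotProduct_self_eq_norm_sq]
  calc x ⬝ᵥ (A *ᵥ x) ≤ ‖WithLp.toLp 2 x‖ * ‖WithLp.toLp 2 (A *ᵥ x)‖ := h
    _ ≤ ‖WithLp.toLp 2 x‖ * (‖A‖ * ‖WithLp.toLp 2 x‖) := by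
      gcongr; exact A.l2_opNorm_mulVec _
    _ = ‖A‖ * ‖WithLp.toLp 2 x‖ ^ 2 := by ring

lemma dotProduct_mulVec_le_of_posSemidef_smul_one_sub {A : Matrix n n ℝ} {c : ℝ}
    (h : (c • 1 - A).PosSemidef) (x : n → ℝ) : x ⬝ᵥ (A *ᵥ x) ≤ c * (x ⬝ᵥ x) := by
  have := h.dotProduct_mulVec_nonneg x
  rw [star_trivial, sub_mulVec, smul_mulVec, one_mulVec, dotProduct_sub, dotProduct_smul,
    smul_eq_mul] at this
  linarith

lemma posSemidef_smul_one_sub_of_dotProduct_mulVec_le {A : Matrix n n ℝ} {c : ℝ}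
    (hA : A.IsSymm) (h : ∀ x, x ⬝ᵥ (A *ᵥ x) ≤ c * (x ⬝ᵥ x)) : (c • 1 - A).PosSemidef := by
  refine .of_dotProduct_mulVec_nonneg ?_ fun x ↦ ?_
  · rw [isHermitian_iff_isSymm]
    exact (isSymm_one.smul c).sub hA
  · rw [star_trivial, sub_mulVec, smul_mulVec, one_mulVec, dotProduct_sub, dotProduct_smul,
      smul_eq_mul, sub_nonneg]
    exact h x

lemma trace_le_of_posSemidef_smul_one_sub {A : Matrix n n ℝ} {c : ℝ}
    (h : (c • 1 - A).PosSemidef) : A.trace ≤ Fintype.card n * c := by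
  have := h.trace_nonneg
  rw [trace_sub, trace_smul, trace_one, smul_eq_mul] at this
  linarith

lemma dotProduct_add_transpose_mul_mul_mulVec_le [DecidableEq m] {Q : Matrix n n ℝ}
    {R : Matrix m m ℝ} {K : Matrix m n ℝ} {α κ : ℝ} (hα : 0 ≤ α)
    (hQ : (α • 1 - Q).PosSemidef) (hR : (α • 1 - R).PosSemidef) (hK : ‖K‖ ≤ κ) (y : n → ℝ) :
    y ⬝ᵥ ((Q + Kᵀ * R * K) *ᵥ y) ≤ α * (1 + κ ^ 2) * (y ⬝ᵥ y) := by
  rw [add_mulVec, dotProduct_add, dotProduct_transpose_mul_mul_mulVec]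
  have hKy := mul_le_mul_of_nonneg_left (mulVec_dotProduct_self_le_of_l2_opNorm_le hK y) hα
  linarith [dotProduct_mulVec_le_of_posSemidef_smul_one_sub hQ y,
    dotProduct_mulVec_le_of_posSemidef_smul_one_sub hR (K *ᵥ y)]

theorem dotProduct_mulVec_le_of_lyapunov {P S M : Matrix n n ℝ} (hP : P = S + Mᵀ * P * M)
    {β κ ρ : ℝ} (hβ : 0 ≤ β) (hS : ∀ y, y ⬝ᵥ (S *ᵥ y) ≤ β * (y ⬝ᵥ y))
    (hM : ∀ t : ℕ, ‖M ^ t‖ ≤ κ * ρ ^ t) (hρ : ρ ^ 2 < 1) (x : n → ℝ) :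
    x ⬝ᵥ (P *ᵥ x) ≤ β * κ ^ 2 / (1 - ρ ^ 2) * (x ⬝ᵥ x) := by
  have horbit (t : ℕ) : (M ^ t *ᵥ x) ⬝ᵥ (M ^ t *ᵥ x) ≤ κ ^ 2 * (x ⬝ᵥ x) * (ρ ^ 2) ^ t :=
    (mulVec_dotProduct_self_le_of_l2_opNorm_le (hM t) x).trans_eq (by ring)
  have hsum (T : ℕ) : ∑ t ∈ range T, (M ^ t *ᵥ x) ⬝ᵥ (S *ᵥ (M ^ t *ᵥ x)) ≤
      β * κ ^ 2 / (1 - ρ ^ 2) * (x ⬝ᵥ x) :=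
    calc _ ≤ ∑ t ∈ range T, β * κ ^ 2 * (x ⬝ᵥ x) * (ρ ^ 2) ^ t :=
          sum_le_sum fun t _ ↦
            (hS _).trans <| (mul_le_mul_of_nonneg_left (horbit t) hβ).trans_eq (by ring)
      _ = β * κ ^ 2 * (x ⬝ᵥ x) * ∑ t ∈ range T, (ρ ^ 2) ^ t := by rw [mul_sum]
      _ ≤ β * κ ^ 2 * (x ⬝ᵥ x) * (1 / (1 - ρ ^ 2)) := by
          have hx : 0 ≤ x ⬝ᵥ x := by simpa using dotProduct_self_star_nonneg x
          gcongr
          simpa using geom_sum_Ico_le_of_lt_one (m := 0) (n := T) (sq_nonneg ρ) hρ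
      _ = β * κ ^ 2 / (1 - ρ ^ 2) * (x ⬝ᵥ x) := by ring
  have htail (T : ℕ) : (M ^ T *ᵥ x) ⬝ᵥ (P *ᵥ (M ^ T *ᵥ x)) ≤
      ‖P‖ * (κ ^ 2 * (x ⬝ᵥ x)) * (ρ ^ 2) ^ T :=
    (dotProduct_mulVec_le_l2_opNorm_mul P _).trans <| by
      rw [mul_assoc]; exact mul_le_mul_of_nonneg_left (horbit T) (norm_nonneg P)
  have hlim : Tendsto (fun T : ℕ ↦ β * κ ^ 2 / (1 - ρ ^ 2) * (x ⬝ᵥ x) +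
      ‖P‖ * (κ ^ 2 * (x ⬝ᵥ x)) * (ρ ^ 2) ^ T) atTop
      (𝓝 (β * κ ^ 2 / (1 - ρ ^ 2) * (x ⬝ᵥ x))) := by
    simpa using tendsto_const_nhds.add
      ((tendsto_pow_atTop_nhds_zero_of_lt_one (sq_nonneg ρ) hρ).const_mul _)
  refine ge_of_tendsto' hlim fun T ↦ ?_
  rw [dotProduct_mulVec_eq_sum_add_of_lyapunov hP x T]
  exact add_le_add (hsum T) (htail T)

end Matrix

lemma StronglyStable.l2_opNorm_pow_le {n : ℕ} {M : Matrix (Fin n) (Fin n) ℝ} {κ γ : ℝ}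
    (hM : StronglyStable M κ γ) (t : ℕ) : ‖M ^ t‖ ≤ κ * (1 - γ) ^ t := by
  obtain ⟨H, L, hH, rfl, hL, hκ⟩ := hM
  have hLt : ‖L ^ t‖ ≤ (1 - γ) ^ t :=
    (norm_pow_le_of_norm_one_le l2_opNorm_one_le L t).trans
      (pow_le_pow_left₀ (norm_nonneg L) hL t)
  calc ‖(H * L * H⁻¹) ^ t‖ = ‖H * L ^ t * H⁻¹‖ := by
        congr 1; exact Units.conj_pow (nonsingInvUnit H hH) L t
    _ ≤ ‖H‖ * ‖L ^ t‖ * ‖H⁻¹‖ := norm_mul₃_le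
    _ ≤ ‖H‖ * (1 - γ) ^ t * ‖H⁻¹‖ := by gcongr
    _ = ‖H‖ * ‖H⁻¹‖ * (1 - γ) ^ t := by ring
    _ ≤ κ * (1 - γ) ^ t := by gcongr; exact (norm_nonneg _).trans hLt

theorem lyapunov_solution_loewner_bound_general {n m : ℕ}
    (M : Matrix (Fin n) (Fin n) ℝ) (K : Matrix (Fin m) (Fin n) ℝ)
    (Q P : Matrix (Fin n) (Fin n) ℝ) (R : Matrix (Fin m) (Fin m) ℝ)
    (κ₀ γ₀ α₁ : ℝ) (hγ₀0 : 0 < γ₀) (hγ₀1 : γ₀ < 1) (hα₁ : 0 < α₁)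
    (hM : StronglyStable M κ₀ γ₀) (hK : ‖K‖ ≤ κ₀)
    (hPsymm : P.IsSymm)
    (hQ1 : (α₁ • (1 : Matrix (Fin n) (Fin n) ℝ) - Q).PosSemidef)
    (hR1 : (α₁ • (1 : Matrix (Fin m) (Fin m) ℝ) - R).PosSemidef)
    (hLyap : P = Q + Kᵀ * R * K + Mᵀ * P * M) :
    ((κ₀ ^ 2 / γ₀ * α₁ * (1 + κ₀ ^ 2)) • (1 : Matrix (Fin n) (Fin n) ℝ) - P).PosSemidef ∧
      P.trace ≤ (n + m : ℝ) * (κ₀ ^ 2 / γ₀) * α₁ * (1 + κ₀ ^ 2) := by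
  set c := κ₀ ^ 2 / γ₀ * α₁ * (1 + κ₀ ^ 2)
  have hconst : α₁ * (1 + κ₀ ^ 2) * κ₀ ^ 2 / (1 - (1 - γ₀) ^ 2) ≤ c := by
    rw [show c = α₁ * (1 + κ₀ ^ 2) * κ₀ ^ 2 / γ₀ by ring]
    exact div_le_div_of_nonneg_left (by positivity) hγ₀0 (by nlinarith)
  have hquad (x : Fin n → ℝ) : x ⬝ᵥ (P *ᵥ x) ≤ c * (x ⬝ᵥ x) :=
    (dotProduct_mulVec_le_of_lyapunov hLyap (by positivity)
      (dotProduct_add_transpose_mul_mul_mulVec_le hα₁.le hQ1 hR1 hK) hM.l2_opNorm_pow_le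
      (by nlinarith) x).trans
      (mul_le_mul_of_nonneg_right hconst (by simpa using dotProduct_self_star_nonneg x))
  have hpsd := posSemidef_smul_one_sub_of_dotProduct_mulVec_le hPsymm hquad
  refine ⟨hpsd, ?_⟩
  calc P.trace ≤ n * c := by simpa using trace_le_of_posSemidef_smul_one_sub hpsd
    _ ≤ (n + m) * c := by gcongr; exact le_add_of_nonneg_right m.cast_nonneg
    _ = (n + m : ℝ) * (κ₀ ^ 2 / γ₀) * α₁ * (1 + κ₀ ^ 2) := by ring

/-- If `M` is `(κ₀,γ₀)`-strongly stable, `‖K‖ ≤ κ₀`, `0 ⪯ Q, R ⪯ α₁·I`, and `P` solves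
the Lyapunov equation `P = Q + KᵀRK + MᵀPM`, then `P ⪯ (κ₀²/γ₀)·α₁·(1+κ₀²)·I` and hence
`tr P ≤ (n+m)·(κ₀²/γ₀)·α₁·(1+κ₀²)`. -/
theorem lyapunov_solution_loewner_bound {n m : ℕ}
    (M : Matrix (Fin n) (Fin n) ℝ) (K : Matrix (Fin m) (Fin n) ℝ)
    (Q P : Matrix (Fin n) (Fin n) ℝ) (R : Matrix (Fin m) (Fin m) ℝ)
    (κ₀ γ₀ α₁ : ℝ) (hκ₀ : 0 < κ₀) (hγ₀0 : 0 < γ₀) (hγ₀1 : γ₀ < 1) (hα₁ : 0 < α₁)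
    (hM : StronglyStable M κ₀ γ₀) (hK : ‖K‖ ≤ κ₀)
    (hQsymm : Q.IsSymm) (hRsymm : R.IsSymm) (hPsymm : P.IsSymm)
    (hQ0 : Q.PosSemidef) (hQ1 : (α₁ • (1 : Matrix (Fin n) (Fin n) ℝ) - Q).PosSemidef)
    (hR0 : R.PosSemidef) (hR1 : (α₁ • (1 : Matrix (Fin m) (Fin m) ℝ) - R).PosSemidef)
    (hLyap : P = Q + Kᵀ * R * K + Mᵀ * P * M) :
    ((κ₀ ^ 2 / γ₀ * α₁ * (1 + κ₀ ^ 2)) • (1 : Matrix (Fin n) (Fin n) ℝ) - P).PosSemidef ∧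
      P.trace ≤ (n + m : ℝ) * (κ₀ ^ 2 / γ₀) * α₁ * (1 + κ₀ ^ 2) :=
  lyapunov_solution_loewner_bound_general M K Q P R κ₀ γ₀ α₁ hγ₀0 hγ₀1 hα₁ hM hK hPsymm hQ1 hR1
    hLyap
end

section
/- Let D be a real symmetric n×n matrix and let M be an n×n real matrix that is (κ,γ)-strongly stable for some κ > 0 and 0 < γ < 1. If D ⪯ MᵀDM, then D ⪯ 0. -/
open Matrix
open scoped Matrix.Norms.L2Operator

open Filter Topology

namespace Matrix

variable {n : Type*} [Fintype n]

theorem conj_pow_of_isUnit_det [DecidableEq n] {H : Matrix n n ℝ} (hH : IsUnit H.det)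
    (L : Matrix n n ℝ) (k : ℕ) : (H * L * H⁻¹) ^ k = H * L ^ k * H⁻¹ :=
  Units.conj_pow (nonsingInvUnit H hH) L k

theorem dotProduct_mulVec_le_of_posSemidef_sub {D M : Matrix n n ℝ}
    (h : (Mᵀ * D * M - D).PosSemidef) (x : n → ℝ) :
    x ⬝ᵥ D *ᵥ x ≤ (M *ᵥ x) ⬝ᵥ D *ᵥ (M *ᵥ x) := by
  have := h.dotProduct_mulVec_nonneg x
  rwa [star_trivial, sub_mulVec, dotProduct_sub, sub_nonneg, ← mulVec_mulVec, ← mulVec_mulVec,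
    dotProduct_mulVec x Mᵀ, vecMul_transpose] at this

theorem monotone_dotProduct_mulVec_pow [DecidableEq n] {D M : Matrix n n ℝ}
    (h : (Mᵀ * D * M - D).PosSemidef) (x : n → ℝ) :
    Monotone fun k : ℕ => (M ^ k *ᵥ x) ⬝ᵥ D *ᵥ (M ^ k *ᵥ x) := by
  refine monotone_nat_of_le_succ fun k => ?_
  rw [pow_succ', ← mulVec_mulVec]
  exact dotProduct_mulVec_le_of_posSemidef_sub h _

theorem dotProduct_mulVec_nonpos_of_tendsto_pow [DecidableEq n] {D M : Matrix n n ℝ}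
    (h : (Mᵀ * D * M - D).PosSemidef) (hM : Tendsto (M ^ ·) atTop (𝓝 0)) (x : n → ℝ) :
    x ⬝ᵥ D *ᵥ x ≤ 0 := by
  have hq : Continuous fun A : Matrix n n ℝ => (A *ᵥ x) ⬝ᵥ D *ᵥ (A *ᵥ x) := by
    fun_prop
  have := (hq.tendsto 0).comp hM
  simpa using (monotone_dotProduct_mulVec_pow h x).ge_of_tendsto this 0

end Matrix

theorem StronglyStable.tendsto_pow_atTop_nhds_zero {n : ℕ} {M : Matrix (Fin n) (Fin n) ℝ}
    {κ γ : ℝ} (hM : StronglyStable M κ γ) (hγ : 0 < γ) : Tendsto (M ^ ·) atTop (𝓝 0) := by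
  obtain ⟨H, L, hH, rfl, hL, -⟩ := hM
  have hLk : Tendsto (L ^ ·) atTop (𝓝 0) :=
    tendsto_pow_atTop_nhds_zero_of_norm_lt_one (by linarith)
  simpa [Matrix.conj_pow_of_isUnit_det hH] using
    (hLk.const_mul H).mul_const H⁻¹

theorem negSemidef_of_le_conj_general {n : ℕ}
    (D M : Matrix (Fin n) (Fin n) ℝ) (κ γ : ℝ)
    (hγ0 : 0 < γ)
    (hD : D.IsSymm) (hM : StronglyStable M κ γ)
    (h : (Mᵀ * D * M - D).PosSemidef) :
    (-D).PosSemidef := by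
  refine .of_dotProduct_mulVec_nonneg (hD.neg : (-D).IsSymm) fun x => ?_
  rw [star_trivial, neg_mulVec, dotProduct_neg, neg_nonneg]
  exact dotProduct_mulVec_nonpos_of_tendsto_pow h (hM.tendsto_pow_atTop_nhds_zero hγ0) x

/-- If `D` is symmetric, `M` is `(κ,γ)`-strongly stable, and `D ⪯ MᵀDM`, then `D ⪯ 0`. -/
theorem negSemidef_of_le_conj {n : ℕ}
    (D M : Matrix (Fin n) (Fin n) ℝ) (κ γ : ℝ)
    (hκ : 0 < κ) (hγ0 : 0 < γ) (hγ1 : γ < 1)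
    (hD : D.IsSymm) (hM : StronglyStable M κ γ)
    (h : (Mᵀ * D * M - D).PosSemidef) :
    (-D).PosSemidef :=
  negSemidef_of_le_conj_general D M κ γ hγ0 hD hM h
end
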